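/- Let a > 0, b ≥ 0, d ∈ ℕ, and h ≥ (b + d/a)(d+1). If n₁ = ⌊a(h+b)⌋ then binomial(n₁+d, d+1) ≤ ((ah)^{d+1}/(d+1)!)·(1 + 2(d+1)(ab+d)/(ah)), and if n₂ = ⌊a(h−b)⌋ then binomial(n₂+d, d+1) ≥ ((ah)^{d+1}/(d+1)!)·(1 − 2(d+1)(ab+1)/(ah)). -/
import Mathlib

lemma aux_pow (x : ℝ) (hx : 0 ≤ x) : ∀ n : ℕ, (n : ℝ) * x ≤ 1 → (1+x)^n ≤ 1 + n*x + (n*x)^2 := by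
  intro n
  induction n with
  | zero => simp
  | succ n ih =>
    intro hnx
    push_cast at hnx
    have hx1 : (n:ℝ)*x ≤ 1 := by nlinarith
    have h1 := ih hx1
    have h0 : (0:ℝ) ≤ 1 + x := by linarith
    have hpn : (0:ℝ) ≤ (1 + x)^n := pow_nonneg h0 n
    have h2 : (n:ℝ) * ((n:ℝ)*x) ≤ (n:ℝ) * 1 := mul_le_mul_of_nonneg_left hx1 (by positivity)
    have h3 : 0 ≤ x*x*((n:ℝ)*1 - (n:ℝ)*((n:ℝ)*x)) := mul_nonneg (mul_nonneg hx hx) (by linarith)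
    calc (1+x)^(n+1) = (1+x)^n * (1+x) := by ring
    _ ≤ (1 + n*x + (n*x)^2) * (1+x) := by nlinarith
    _ ≤ 1 + (↑(n+1))*x + ((↑(n+1))*x)^2 := by push_cast; nlinarith [h3, mul_nonneg hx hx]

set_option maxHeartbeats 1000000 in
theorem stmt_5 (a b : ℝ) (d : ℕ) (h : ℝ) (ha : 0 < a) (hb : 0 ≤ b)
    (hh : (b + d / a) * (d + 1) ≤ h) :
    (Nat.choose (⌊a * (h + b)⌋₊ + d) (d + 1) : ℝ)
        ≤ (a * h) ^ (d + 1) / (Nat.factorial (d + 1)) * (1 + 2 * (d + 1) * (a * b + d) / (a * h)) ∧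
      (a * h) ^ (d + 1) / (Nat.factorial (d + 1)) * (1 - 2 * (d + 1) * (a * b + 1) / (a * h))
        ≤ (Nat.choose (⌊a * (h - b)⌋₊ + d) (d + 1) : ℝ) := by
  have ha' : a ≠ 0 := ha.ne'
  have hdr : (0:ℝ) ≤ (d:ℝ) := Nat.cast_nonneg d
  have hh0 : 0 ≤ h := le_trans (by positivity) hh
  have habd : a*(b + (d:ℝ)/a) = a*b + d := by field_simp
  have key : (a*b + d) * (d+1) ≤ a*h := by
    have h2 := mul_le_mul_of_nonneg_left hh ha.le
    calc (a*b+(d:ℝ))*(↑d+1) = a*((b+↑d/a)*(↑d+1)) := by rw [← habd]; ring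
    _ ≤ a*h := h2
  have hK : (0:ℝ) < (Nat.factorial (d+1) : ℝ) := by
    exact_mod_cast Nat.factorial_pos (d+1)
  rcases hh0.lt_or_eq with hpos | h0
  · -- main case 0 < h
    have hH : 0 < a*h := mul_pos ha hpos
    constructor
    · -- upper bound
      have hn1 : (⌊a*(h+b)⌋₊ : ℝ) + d ≤ a*h + (a*b + d) := by
        have hf := Nat.floor_le (by positivity : (0:ℝ) ≤ a*(h+b))
        nlinarith
      have hnat1 : (Nat.factorial (d+1)) * Nat.choose (⌊a*(h+b)⌋₊ + d) (d+1)
          ≤ (⌊a*(h+b)⌋₊ + d)^(d+1) := by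
        rw [← Nat.descFactorial_eq_factorial_mul_choose]
        exact Nat.descFactorial_le_pow _ _
      have hc1 : (Nat.factorial (d+1) : ℝ) * (Nat.choose (⌊a*(h+b)⌋₊ + d) (d+1) : ℝ)
          ≤ ((⌊a*(h+b)⌋₊ : ℝ) + d)^(d+1) := by exact_mod_cast hnat1
      have hx0 : (0:ℝ) ≤ (a*b+(d:ℝ))/(a*h) := by positivity
      have hx1 : ((d:ℝ)+1) * ((a*b+(d:ℝ))/(a*h)) ≤ 1 := by
        rw [← mul_div_assoc, div_le_one hH]
        linear_combination key
      have haux := aux_pow ((a*b+(d:ℝ))/(a*h)) hx0 (d+1) (by push_cast; exact hx1)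
      push_cast at haux
      have hpow1 : (a*h + (a*b+d))^(d+1)
          ≤ (a*h)^(d+1) * (1 + 2*((d:ℝ)+1)*((a*b+(d:ℝ))/(a*h))) := by
        have heq : a*h + (a*b+(d:ℝ)) = (a*h) * (1+(a*b+(d:ℝ))/(a*h)) := by field_simp
        rw [heq, mul_pow (a*h) (1+(a*b+(d:ℝ))/(a*h))]
        apply mul_le_mul_of_nonneg_left _ (by positivity)
        nlinarith [mul_nonneg (by positivity : (0:ℝ) ≤ (d:ℝ)+1) hx0]
      calc (Nat.choose (⌊a * (h + b)⌋₊ + d) (d + 1) : ℝ)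
          ≤ ((⌊a*(h+b)⌋₊ : ℝ) + d)^(d+1) / (Nat.factorial (d+1) : ℝ) := by
            rw [le_div_iff₀ hK]; linarith [hc1]
        _ ≤ (a*h + (a*b+d))^(d+1) / (Nat.factorial (d+1) : ℝ) := by
            rw [div_le_div_iff_of_pos_right hK]
            exact pow_le_pow_left₀ (by positivity) hn1 _
        _ ≤ (a*h)^(d+1) * (1 + 2*((d:ℝ)+1)*((a*b+(d:ℝ))/(a*h))) / (Nat.factorial (d+1) : ℝ) := by
            rw [div_le_div_iff_of_pos_right hK]
            exact hpow1
        _ = (a * h) ^ (d + 1) / (Nat.factorial (d + 1)) * (1 + 2 * (d + 1) * (a * b + d) / (a * h)) := by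
            field_simp
    · -- lower bound
      by_cases hy : a*h ≤ 2*((d:ℝ)+1)*(a*b+1)
      · have h1 : 1 - 2 * ((d:ℝ) + 1) * (a * b + 1) / (a * h) ≤ 0 := by
          rw [sub_nonpos, le_div_iff₀ hH]
          nlinarith
        have h2 := mul_nonpos_of_nonneg_of_nonpos
          (by positivity : (0:ℝ) ≤ (a*h)^(d+1) / (Nat.factorial (d+1) : ℝ)) h1
        calc (a * h) ^ (d + 1) / (Nat.factorial (d + 1) : ℝ) * (1 - 2 * (↑d + 1) * (a * b + 1) / (a * h))
            ≤ 0 := h2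
          _ ≤ _ := Nat.cast_nonneg _
      · push_neg at hy
        have hn2 : a*h - (a*b+1) ≤ (⌊a*(h-b)⌋₊ : ℝ) := by
          have hf := Nat.sub_one_lt_floor (a*(h-b))
          nlinarith
        have hnn : (0:ℝ) ≤ a*h - (a*b+1) := by nlinarith
        have hnat2 : (⌊a*(h-b)⌋₊)^(d+1) ≤ (Nat.factorial (d+1)) * Nat.choose (⌊a*(h-b)⌋₊ + d) (d+1) := by
          rw [← Nat.descFactorial_eq_factorial_mul_choose]
          have h5 := Nat.pow_sub_le_descFactorial (⌊a*(h-b)⌋₊ + d) (d+1)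
          have he : ⌊a*(h-b)⌋₊ + d + 1 - (d+1) = ⌊a*(h-b)⌋₊ := by omega
          rwa [he] at h5
        have hc2 : ((⌊a*(h-b)⌋₊ : ℝ))^(d+1)
            ≤ (Nat.factorial (d+1) : ℝ) * (Nat.choose (⌊a*(h-b)⌋₊ + d) (d+1) : ℝ) := by
          exact_mod_cast hnat2
        have hy0 : (0:ℝ) < (a*b+1)/(a*h) := by positivity
        have hy2 : -2 ≤ -((a*b+1)/(a*h)) := by
          have h6 : (a*b+1)/(a*h) ≤ 1 := by
            rw [div_le_one hH]; nlinarith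
          linarith
        have hbern := one_add_mul_le_pow hy2 (d+1)
        push_cast at hbern
        have hpow2 : (a*h)^(d+1) * (1 - 2*((d:ℝ)+1)*((a*b+1)/(a*h)))
            ≤ (a*h - (a*b+1))^(d+1) := by
          have heq : a*h - (a*b+1) = (a*h) * (1 + -((a*b+1)/(a*h))) := by
            field_simp
            ring
          rw [heq, mul_pow (a*h) (1 + -((a*b+1)/(a*h)))]
          apply mul_le_mul_of_nonneg_left _ (by positivity)
          nlinarith [mul_nonneg (by positivity : (0:ℝ) ≤ (d:ℝ)+1) hy0.le]
        calc (a * h) ^ (d + 1) / (Nat.factorial (d + 1) : ℝ) * (1 - 2 * (↑d + 1) * (a * b + 1) / (a * h))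
            = (a*h)^(d+1) * (1 - 2*((d:ℝ)+1)*((a*b+1)/(a*h))) / (Nat.factorial (d+1) : ℝ) := by
              rw [mul_div_assoc (2*((d:ℝ)+1)) (a*b+1) (a*h), div_mul_eq_mul_div]
          _ ≤ (a*h - (a*b+1))^(d+1) / (Nat.factorial (d+1) : ℝ) := by
              rw [div_le_div_iff_of_pos_right hK]; exact hpow2
          _ ≤ ((⌊a*(h-b)⌋₊ : ℝ))^(d+1) / (Nat.factorial (d+1) : ℝ) := by
              rw [div_le_div_iff_of_pos_right hK]
              exact pow_le_pow_left₀ hnn hn2 _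
          _ ≤ (Nat.choose (⌊a*(h-b)⌋₊ + d) (d+1) : ℝ) := by
              rw [div_le_iff₀ hK]; linarith [hc2]
  · -- degenerate case h = 0
    have h0' : h = 0 := h0.symm
    subst h0'
    have hq : 0 ≤ a*b := mul_nonneg ha.le hb
    have hp : 0 ≤ (a*b + (d:ℝ)) * (d:ℝ) := mul_nonneg (by linarith) hdr
    have hz : a * (0:ℝ) = 0 := mul_zero a
    have hd0 : a*b + (d:ℝ) = 0 := by nlinarith [key, hp, hq, hz]
    have hab0 : a*b = 0 := by linarith
    have hdr0 : (d:ℝ) = 0 := by linarith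
    have hd00 : d = 0 := by exact_mod_cast hdr0
    have hb0 : b = 0 := by
      rcases mul_eq_zero.mp hab0 with h' | h'
      · exact absurd h' ha'
      · exact h'
    subst hd00; subst hb0
    norm_num
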